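/- For every finite graph G with n ≥ 1 vertices and fixed B > 0, the occupancy fraction λ ↦ α_G(B,λ) is strictly increasing in λ on (0,∞). -/
import Mathlib


open Finset

/-- Number of vertices with spin `+` (represented by `true`). -/
def nPlus {V : Type*} [Fintype V] (σ : V → Bool) : ℕ :=
  (Finset.univ.filter fun v => σ v = true).card

/-- Number of monochromatic edges of `G` under the spin assignment `σ`. -/
def monoEdges {V : Type*} [Fintype V] [DecidableEq V] (G : SimpleGraph V)
    [DecidableRel G.Adj] (σ : V → Bool) : ℕ :=
  (G.edgeFinset.filter fun e =>
    Sym2.lift ⟨fun u v => decide (σ u = σ v), fun u v => by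
      rw [decide_eq_decide]; exact eq_comm⟩ e = true).card

/-- The Ising partition function `Z_G(B, λ)`. -/
noncomputable def Zising {V : Type*} [Fintype V] [DecidableEq V] (G : SimpleGraph V)
    [DecidableRel G.Adj] (B lam : ℝ) : ℝ :=
  ∑ σ : V → Bool, B ^ monoEdges G σ * lam ^ nPlus σ

/-- The occupancy fraction: the expected fraction of `+` vertices under the Ising measure. -/
noncomputable def occ {V : Type*} [Fintype V] [DecidableEq V] (G : SimpleGraph V)
    [DecidableRel G.Adj] (B lam : ℝ) : ℝ :=
  (1 / (Fintype.card V : ℝ)) *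
    ∑ σ : V → Bool, (B ^ monoEdges G σ * lam ^ nPlus σ / Zising G B lam) * (nPlus σ : ℝ)


lemma key_nonneg {a b : ℝ} (ha : 0 < a) (hab : a ≤ b) (m n : ℕ) :
    0 ≤ ((n : ℝ) - m) * (b ^ n * a ^ m - b ^ m * a ^ n) := by
  have hb : 0 < b := lt_of_lt_of_le ha hab
  rcases le_total m n with h | h
  · obtain ⟨k, rfl⟩ := Nat.exists_eq_add_of_le h
    have hk : a ^ k ≤ b ^ k := pow_le_pow_left₀ ha.le hab k
    have h1 : 0 ≤ b ^ m * a ^ m * (b ^ k - a ^ k) := by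
      apply mul_nonneg (by positivity) (by linarith)
    have : ((m + k : ℕ) : ℝ) - m = k := by push_cast; ring
    rw [this, pow_add, pow_add]
    nlinarith [Nat.cast_nonneg (α := ℝ) k]
  · obtain ⟨k, rfl⟩ := Nat.exists_eq_add_of_le h
    have hk : a ^ k ≤ b ^ k := pow_le_pow_left₀ ha.le hab k
    have h1 : 0 ≤ b ^ n * a ^ n * (b ^ k - a ^ k) := by
      apply mul_nonneg (by positivity) (by linarith)
    have : ((n : ℝ)) - ((n + k : ℕ) : ℝ) = -k := by push_cast; ring
    rw [this, pow_add, pow_add]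
    nlinarith [Nat.cast_nonneg (α := ℝ) k]

lemma key_pos {a b : ℝ} (ha : 0 < a) (hab : a < b) {m n : ℕ} (hmn : m < n) :
    0 < ((n : ℝ) - m) * (b ^ n * a ^ m - b ^ m * a ^ n) := by
  have hb : 0 < b := ha.trans hab
  obtain ⟨k, rfl⟩ := Nat.exists_eq_add_of_le hmn.le
  have hk0 : k ≠ 0 := by omega
  have hk : a ^ k < b ^ k := pow_lt_pow_left₀ hab ha.le hk0
  have h1 : 0 < b ^ m * a ^ m * (b ^ k - a ^ k) := by
    apply mul_pos (by positivity) (by linarith)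
  have h2 : ((m + k : ℕ) : ℝ) - m = k := by push_cast; ring
  have h3 : (0:ℝ) < k := by exact_mod_cast Nat.pos_of_ne_zero hk0
  rw [h2, pow_add, pow_add]
  nlinarith

/-- For fixed `B > 0`, the occupancy fraction is strictly increasing in `λ` on `(0, ∞)`. -/
theorem occ_strictMonoOn_lambda {V : Type*} [Fintype V] [DecidableEq V] [Nonempty V]
    (G : SimpleGraph V) [DecidableRel G.Adj] (B : ℝ) (hB : 0 < B) :
    StrictMonoOn (fun lam => occ G B lam) (Set.Ioi (0 : ℝ)) := by
  intro a ha b hb hab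
  simp only [Set.mem_Ioi] at ha hb
  classical
  set p : ℝ → (V → Bool) → ℝ := fun lam σ => B ^ monoEdges G σ * lam ^ nPlus σ with hp
  have hpa : ∀ σ, 0 < p a σ := fun σ => by simp only [hp]; positivity
  have hpb : ∀ σ, 0 < p b σ := fun σ => by simp only [hp]; positivity
  have hZa : 0 < Zising G B a := Finset.sum_pos (fun σ _ => hpa σ) univ_nonempty
  have hZb : 0 < Zising G B b := Finset.sum_pos (fun σ _ => hpb σ) univ_nonempty
  have hZa' : Zising G B a = ∑ σ : V → Bool, p a σ := rfl
  have hZb' : Zising G B b = ∑ σ : V → Bool, p b σ := rfl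
  -- the double-sum difference
  set Ta : ℝ := ∑ σ : V → Bool, p a σ * (nPlus σ : ℝ) with hTa
  set Tb : ℝ := ∑ σ : V → Bool, p b σ * (nPlus σ : ℝ) with hTb
  have hD : Tb * Zising G B a - Ta * Zising G B b
      = ∑ σ : V → Bool, ∑ τ : V → Bool, p b σ * p a τ * ((nPlus σ : ℝ) - (nPlus τ : ℝ)) := by
    have e2 : Ta * Zising G B b
        = ∑ σ : V → Bool, ∑ τ : V → Bool, p b σ * (p a τ * (nPlus τ : ℝ)) := by
      rw [hTa, hZb', Finset.sum_mul_sum, Finset.sum_comm]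
      exact Finset.sum_congr rfl fun σ _ => Finset.sum_congr rfl fun τ _ => by ring
    rw [e2, hTb, hZa', Finset.sum_mul_sum, ← Finset.sum_sub_distrib]
    refine Finset.sum_congr rfl fun σ _ => ?_
    rw [← Finset.sum_sub_distrib]
    refine Finset.sum_congr rfl fun τ _ => ?_
    ring
  have hcomm : (∑ σ : V → Bool, ∑ τ : V → Bool, p b σ * p a τ * ((nPlus σ : ℝ) - (nPlus τ : ℝ)))
      = ∑ σ : V → Bool, ∑ τ : V → Bool, p b τ * p a σ * ((nPlus τ : ℝ) - (nPlus σ : ℝ)) :=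
    Finset.sum_comm
  have h2D : 2 * (Tb * Zising G B a - Ta * Zising G B b)
      = ∑ σ : V → Bool, ∑ τ : V → Bool,
          (B ^ monoEdges G σ * B ^ monoEdges G τ) *
          (((nPlus σ : ℝ) - (nPlus τ : ℝ)) *
            (b ^ nPlus σ * a ^ nPlus τ - b ^ nPlus τ * a ^ nPlus σ)) := by
    rw [two_mul, hD]
    nth_rewrite 1 [hcomm]
    rw [← Finset.sum_add_distrib]
    refine Finset.sum_congr rfl fun σ _ => ?_
    rw [← Finset.sum_add_distrib]
    refine Finset.sum_congr rfl fun τ _ => ?_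
    simp only [hp]
    ring
  have hpos : 0 < 2 * (Tb * Zising G B a - Ta * Zising G B b) := by
    rw [h2D]
    apply Finset.sum_pos'
    · intro σ _
      apply Finset.sum_nonneg
      intro τ _
      exact mul_nonneg (by positivity) (key_nonneg ha hab.le _ _)
    · refine ⟨fun _ => true, Finset.mem_univ _, ?_⟩
      apply Finset.sum_pos'
      · intro τ _
        exact mul_nonneg (by positivity) (key_nonneg ha hab.le _ _)
      · refine ⟨fun _ => false, Finset.mem_univ _, ?_⟩
        have h1 : nPlus (fun _ : V => true) = Fintype.card V := by
          simp [nPlus, Finset.card_univ]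
        have h2 : nPlus (fun _ : V => false) = 0 := by simp [nPlus]
        apply mul_pos (by positivity)
        rw [h1, h2]
        exact key_pos ha hab Fintype.card_pos
  have hkey : Ta * Zising G B b < Tb * Zising G B a := by linarith
  have hoccl : ∀ lam : ℝ, 0 < Zising G B lam →
      occ G B lam = (1 / (Fintype.card V : ℝ)) *
        ((∑ σ : V → Bool, p lam σ * (nPlus σ : ℝ)) / Zising G B lam) := by
    intro lam hZ
    unfold occ
    congr 1
    rw [Finset.sum_div]
    refine Finset.sum_congr rfl fun σ _ => ?_
    simp only [hp]
    field_simp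
  have hN : (0:ℝ) < (Fintype.card V : ℝ) := by
    exact_mod_cast Fintype.card_pos
  show occ G B a < occ G B b
  rw [hoccl a hZa, hoccl b hZb]
  apply mul_lt_mul_of_pos_left _ (by positivity)
  rw [div_lt_div_iff₀ hZa hZb]
  exact hkey
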